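/- Let a, b, c be positive integers with g = gcd(a+c, b+c) > 2c. Then the partizan subtraction game with S_L = {a, b} and S_R = {c} is eventually periodic with period g and period pattern P^c R^{g−2c} N^c: there exists n₀ such that for all n ≥ n₀, writing r = n mod g, the outcome of n is P if r < c, R if c ≤ r < g − c, and N if g − c ≤ r < g. -/
import Mathlib


mutual
def LeftFirstWins (SL SR : Finset ℕ) : ℕ → Prop
  | n => ∃ s ∈ SL, ∃ (_ : 0 < s) (_ : s ≤ n), ¬ RightFirstWins SL SR (n - s)
  termination_by n => n
  decreasing_by omega
def RightFirstWins (SL SR : Finset ℕ) : ℕ → Prop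
  | n => ∃ s ∈ SR, ∃ (_ : 0 < s) (_ : s ≤ n), ¬ LeftFirstWins SL SR (n - s)
  termination_by n => n
  decreasing_by omega
end

inductive Outcome | P | L | R | N
deriving DecidableEq

open Classical in
noncomputable def outcome (SL SR : Finset ℕ) (n : ℕ) : Outcome :=
  if LeftFirstWins SL SR n then
    if RightFirstWins SL SR n then .N else .L
  else
    if RightFirstWins SL SR n then .R else .P

/-! ### Auxiliary lemmas -/

lemma aux_mod_helper {g q r n : ℕ} (h : n = g*q + r) (hr : r < g) : n % g = r := by
  subst h; rw [Nat.mul_add_mod]; exact Nat.mod_eq_of_lt hr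

/-- Chicken McNugget style representability. -/
lemma aux_rep {α β t : ℕ} (hα : 0 < α) (hβ : 0 < β) (hco : Nat.Coprime α β)
    (ht : α * β ≤ t) : ∃ i j : ℕ, t = i * α + j * β := by
  rcases Nat.eq_or_lt_of_le hβ with h1 | h2
  · refine ⟨0, t, ?_⟩
    rw [← h1]; ring
  · haveI : NeZero β := ⟨by omega⟩
    set u := ZMod.unitOfCoprime α hco with hu
    set i := ((t : ZMod β) * ↑u⁻¹).val with hi
    have hilt : i < β := ZMod.val_lt _
    have hcast : ((i * α : ℕ) : ZMod β) = ((t : ℕ) : ZMod β) := by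
      push_cast [hi, ZMod.natCast_val, ZMod.cast_id]
      have hual : (α : ZMod β) = ↑u := (ZMod.coe_unitOfCoprime α hco).symm
      rw [hual, mul_assoc, Units.inv_mul, mul_one]
    have hmod : i * α ≡ t [MOD β] := (ZMod.natCast_eq_natCast_iff _ _ _).mp hcast
    have hle : i * α ≤ t := by
      calc i * α ≤ (β - 1) * α := Nat.mul_le_mul_right _ (by omega)
        _ ≤ α * β - α := by rw [Nat.sub_mul, mul_comm]; omega
        _ ≤ t := by omega
    obtain ⟨j, hj⟩ := (Nat.modEq_iff_dvd' hle).mp hmod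
    refine ⟨i, j, ?_⟩
    have := (Nat.sub_eq_iff_eq_add hle).mp hj
    rw [this, mul_comm β j]; ring

lemma aux_RFW_iff (a b c n : ℕ) (hc : 0 < c) :
    RightFirstWins {a, b} {c} n ↔ (c ≤ n ∧ ¬ LeftFirstWins {a, b} {c} (n - c)) := by
  rw [RightFirstWins]
  constructor
  · rintro ⟨s, hs, _, hsn, hL⟩
    simp only [Finset.mem_singleton] at hs
    subst hs; exact ⟨hsn, hL⟩
  · rintro ⟨hcn, hL⟩
    exact ⟨c, by simp, hc, hcn, hL⟩

lemma aux_LFW_iff (a b c n : ℕ) (ha : 0 < a) (hb : 0 < b) :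
    LeftFirstWins {a, b} {c} n ↔
      ((a ≤ n ∧ ¬ RightFirstWins {a, b} {c} (n - a)) ∨
       (b ≤ n ∧ ¬ RightFirstWins {a, b} {c} (n - b))) := by
  rw [LeftFirstWins]
  constructor
  · rintro ⟨s, hs, _, hsn, hR⟩
    simp only [Finset.mem_insert, Finset.mem_singleton] at hs
    rcases hs with rfl | rfl
    · exact Or.inl ⟨hsn, hR⟩
    · exact Or.inr ⟨hsn, hR⟩
  · rintro (⟨hsn, hR⟩ | ⟨hsn, hR⟩)
    · exact ⟨a, by simp, ha, hsn, hR⟩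
    · exact ⟨b, by simp, hb, hsn, hR⟩

/-- The unrolled characterization of `LeftFirstWins`. -/
def Qprop (a b c n : ℕ) : Prop := ∃ i j : ℕ,
  (i*(a+c)+j*(b+c)+a ≤ n ∧ n < i*(a+c)+j*(b+c)+a+c) ∨
  (i*(a+c)+j*(b+c)+b ≤ n ∧ n < i*(a+c)+j*(b+c)+b+c)

lemma aux_LFW_Q (a b c : ℕ) (ha : 0 < a) (hb : 0 < b) (hc : 0 < c) :
    ∀ n, LeftFirstWins {a, b} {c} n ↔ Qprop a b c n := by
  intro n
  induction n using Nat.strong_induction_on with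
  | _ n IH =>
  rw [aux_LFW_iff a b c n ha hb]
  constructor
  · rintro (⟨hsn, hR⟩ | ⟨hsn, hR⟩)
    · rw [aux_RFW_iff a b c _ hc] at hR
      by_cases h1 : c ≤ n - a
      · have hL : LeftFirstWins {a, b} {c} (n - a - c) := by
          by_contra hnot; exact hR ⟨h1, hnot⟩
        obtain ⟨i, j, hcase⟩ := (IH (n - a - c) (by omega)).mp hL
        refine ⟨i + 1, j, ?_⟩
        have e1 : (i+1)*(a+c) = i*(a+c) + (a+c) := by ring
        rcases hcase with ⟨h2, h3⟩ | ⟨h2, h3⟩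
        · exact Or.inl (by omega)
        · exact Or.inr (by omega)
      · exact ⟨0, 0, Or.inl (by omega)⟩
    · rw [aux_RFW_iff a b c _ hc] at hR
      by_cases h1 : c ≤ n - b
      · have hL : LeftFirstWins {a, b} {c} (n - b - c) := by
          by_contra hnot; exact hR ⟨h1, hnot⟩
        obtain ⟨i, j, hcase⟩ := (IH (n - b - c) (by omega)).mp hL
        refine ⟨i, j + 1, ?_⟩
        have e1 : (j+1)*(b+c) = j*(b+c) + (b+c) := by ring
        rcases hcase with ⟨h2, h3⟩ | ⟨h2, h3⟩
        · exact Or.inl (by omega)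
        · exact Or.inr (by omega)
      · exact ⟨0, 0, Or.inr (by omega)⟩
  · rintro ⟨i, j, hcase⟩
    rcases i with _ | i'
    · rcases j with _ | j'
      · -- i = j = 0 : direct winning move
        rcases hcase with ⟨h2, h3⟩ | ⟨h2, h3⟩
        · refine Or.inl ⟨by omega, ?_⟩
          rw [aux_RFW_iff a b c _ hc]
          rintro ⟨h4, _⟩; omega
        · refine Or.inr ⟨by omega, ?_⟩
          rw [aux_RFW_iff a b c _ hc]
          rintro ⟨h4, _⟩; omega
      · -- j = j' + 1 : move b
        have e1 : (j'+1)*(b+c) = j'*(b+c) + (b+c) := by ring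
        have hbn : b ≤ n := by rcases hcase with ⟨h2, h3⟩ | ⟨h2, h3⟩ <;> omega
        refine Or.inr ⟨hbn, ?_⟩
        rw [aux_RFW_iff a b c _ hc]
        rintro ⟨h4, h5⟩
        apply h5
        refine (IH (n - b - c) (by omega)).mpr ⟨0, j', ?_⟩
        rcases hcase with ⟨h2, h3⟩ | ⟨h2, h3⟩
        · exact Or.inl (by omega)
        · exact Or.inr (by omega)
    · -- i = i' + 1 : move a
      have e1 : (i'+1)*(a+c) = i'*(a+c) + (a+c) := by ring
      have han : a ≤ n := by rcases hcase with ⟨h2, h3⟩ | ⟨h2, h3⟩ <;> omega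
      refine Or.inl ⟨han, ?_⟩
      rw [aux_RFW_iff a b c _ hc]
      rintro ⟨h4, h5⟩
      apply h5
      refine (IH (n - a - c) (by omega)).mpr ⟨i', j, ?_⟩
      rcases hcase with ⟨h2, h3⟩ | ⟨h2, h3⟩
      · exact Or.inl (by omega)
      · exact Or.inr (by omega)

theorem stmt_6 (a b c : ℕ) (ha : 0 < a) (hb : 0 < b) (hc : 0 < c)
    (h : 2 * c < Nat.gcd (a + c) (b + c)) :
    ∃ n₀ : ℕ, ∀ n ≥ n₀,
      (n % Nat.gcd (a + c) (b + c) < c → outcome {a, b} {c} n = .P) ∧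
      (c ≤ n % Nat.gcd (a + c) (b + c) →
        n % Nat.gcd (a + c) (b + c) < Nat.gcd (a + c) (b + c) - c →
        outcome {a, b} {c} n = .R) ∧
      (Nat.gcd (a + c) (b + c) - c ≤ n % Nat.gcd (a + c) (b + c) →
        outcome {a, b} {c} n = .N) := by
  set g := Nat.gcd (a + c) (b + c) with hg
  have hg0 : 0 < g := Nat.gcd_pos_of_pos_left _ (by omega)
  obtain ⟨α, hα⟩ : g ∣ a + c := Nat.gcd_dvd_left _ _
  obtain ⟨β, hβ⟩ : g ∣ b + c := Nat.gcd_dvd_right _ _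
  have hα0 : 0 < α := by
    rcases Nat.eq_zero_or_pos α with h0 | h0
    · rw [h0, mul_zero] at hα; omega
    · exact h0
  have hβ0 : 0 < β := by
    rcases Nat.eq_zero_or_pos β with h0 | h0
    · rw [h0, mul_zero] at hβ; omega
    · exact h0
  have hcop : Nat.Coprime α β := by
    have h1 : α = (a + c) / g := by rw [hα]; exact (Nat.mul_div_cancel_left _ hg0).symm
    have h2 : β = (b + c) / g := by rw [hβ]; exact (Nat.mul_div_cancel_left _ hg0).symm
    rw [h1, h2]
    exact Nat.coprime_div_gcd_div_gcd hg0
  -- the forward direction: Q n → g - c ≤ n % g   (for all n)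
  have hQmod : ∀ n, Qprop a b c n → g - c ≤ n % g := by
    rintro n ⟨i, j, hcase⟩
    have key : ∀ t : ℕ, 1 ≤ t → g*t ≤ n + c → n < g*t → g - c ≤ n % g := by
      intro t ht h1 h2
      obtain ⟨t', rfl⟩ : ∃ t', t = t' + 1 := ⟨t - 1, by omega⟩
      have e : g*(t'+1) = g*t' + g := by ring
      rw [e] at h1 h2
      have hmod : n % g = n - g*t' := aux_mod_helper (q := t') (by omega) (by omega)
      omega
    rcases hcase with ⟨h2, h3⟩ | ⟨h2, h3⟩
    · refine key (i*α + j*β + α) (by omega) ?_ ?_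
      · have e : g*(i*α + j*β + α) = i*(a+c) + j*(b+c) + (a+c) := by rw [hα, hβ]; ring
        omega
      · have e : g*(i*α + j*β + α) = i*(a+c) + j*(b+c) + (a+c) := by rw [hα, hβ]; ring
        omega
    · refine key (i*α + j*β + β) (by omega) ?_ ?_
      · have e : g*(i*α + j*β + β) = i*(a+c) + j*(b+c) + (b+c) := by rw [hα, hβ]; ring
        omega
      · have e : g*(i*α + j*β + β) = i*(a+c) + j*(b+c) + (b+c) := by rw [hα, hβ]; ring
        omega
  -- the backward direction: for n large, g - c ≤ n % g → Q n
  set N := g * (α * β + α + 1) with hN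
  have hmodQ : ∀ n, N ≤ n → g - c ≤ n % g → Qprop a b c n := by
    intro n hn hr
    set q := n / g with hq
    have hdm : n = g * q + n % g := (Nat.div_add_mod n g).symm
    have hrlt : n % g < g := Nat.mod_lt _ hg0
    have hqbig : α * β + α ≤ q := by
      by_contra hcon
      push_neg at hcon
      have : q + 1 ≤ α * β + α := by omega
      have : g * (q + 1) ≤ g * (α * β + α) := Nat.mul_le_mul_left _ this
      have e1 : g * (q+1) = g*q + g := by ring
      have e2 : g * (α*β+α+1) = g*(α*β+α) + g := by ring
      omega
    obtain ⟨i, j, hij⟩ := aux_rep hα0 hβ0 hcop (t := q + 1 - α) (by omega)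
    refine ⟨i, j, Or.inl ⟨?_, ?_⟩⟩
    · -- i*(a+c)+j*(b+c)+a ≤ n
      have e : i*(a+c) + j*(b+c) + (a+c) = g * (q+1) := by
        rw [hα, hβ]
        have : i*α + j*β + α = q + 1 := by omega
        calc i*(g*α) + j*(g*β) + g*α = g * (i*α + j*β + α) := by ring
          _ = g * (q+1) := by rw [this]
      have e1 : g * (q+1) = g*q + g := by ring
      omega
    · have e : i*(a+c) + j*(b+c) + (a+c) = g * (q+1) := by
        rw [hα, hβ]
        have : i*α + j*β + α = q + 1 := by omega
        calc i*(g*α) + j*(g*β) + g*α = g * (i*α + j*β + α) := by ring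
          _ = g * (q+1) := by rw [this]
      have e1 : g * (q+1) = g*q + g := by ring
      omega
  -- characterization of both predicates for large n
  have hLFW : ∀ n, N ≤ n → (LeftFirstWins {a, b} {c} n ↔ g - c ≤ n % g) := by
    intro n hn
    rw [aux_LFW_Q a b c ha hb hc]
    exact ⟨hQmod n, hmodQ n hn⟩
  have hRFW : ∀ n, N + c ≤ n → (RightFirstWins {a, b} {c} n ↔ c ≤ n % g) := by
    intro n hn
    have hNg : g ≤ N := by
      have : 1 ≤ α * β + α + 1 := by omega
      calc g = g * 1 := (mul_one g).symm
        _ ≤ g * (α*β+α+1) := Nat.mul_le_mul_left _ this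
    rw [aux_RFW_iff a b c n hc, hLFW (n - c) (by omega)]
    have hrlt : n % g < g := Nat.mod_lt _ hg0
    have hdm : n = g * (n / g) + n % g := (Nat.div_add_mod n g).symm
    by_cases hcr : c ≤ n % g
    · -- (n - c) % g = n % g - c < g - c
      have hsub : (n - c) % g = n % g - c :=
        aux_mod_helper (q := n / g) (by omega) (by omega)
      constructor
      · intro _; exact hcr
      · intro _
        refine ⟨by omega, ?_⟩
        omega
    · -- n % g < c : (n - c) % g = n % g + g - c ≥ g - c
      push_neg at hcr
      have hq1 : 1 ≤ n / g := by
        by_contra hcon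
        push_neg at hcon
        interval_cases h : n / g <;> omega
      have e : g * (n / g) = g * (n / g - 1) + g := by
        obtain ⟨q', hq'⟩ : ∃ q', n / g = q' + 1 := ⟨n / g - 1, by omega⟩
        rw [hq', Nat.add_sub_cancel]; ring
      have hsub : (n - c) % g = n % g + g - c :=
        aux_mod_helper (q := n / g - 1) (by omega) (by omega)
      constructor
      · intro ⟨_, hnot⟩
        exfalso; exact hnot (by omega)
      · intro hcon; omega
  -- put it together
  refine ⟨N + c, fun n hn => ?_⟩
  have hL := hLFW n (by omega)
  have hR := hRFW n hn
  have hrlt : n % g < g := Nat.mod_lt _ hg0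
  refine ⟨fun h1 => ?_, fun h1 h2 => ?_, fun h1 => ?_⟩
  · have hnL : ¬ LeftFirstWins {a, b} {c} n := by rw [hL]; omega
    have hnR : ¬ RightFirstWins {a, b} {c} n := by rw [hR]; omega
    rw [outcome, if_neg hnL, if_neg hnR]
  · have hnL : ¬ LeftFirstWins {a, b} {c} n := by rw [hL]; omega
    have hyR : RightFirstWins {a, b} {c} n := by rw [hR]; omega
    rw [outcome, if_neg hnL, if_pos hyR]
  · have hyL : LeftFirstWins {a, b} {c} n := by rw [hL]; omega
    have hyR : RightFirstWins {a, b} {c} n := by rw [hR]; omega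
    rw [outcome, if_pos hyL, if_pos hyR]
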